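/- The representation ρ is non-degenerate: the set { ρ(f)φ : f ∈ L¹(ℝ⁴, ℂ), φ ∈ L²(ℝ², ℂ) } is dense in L²(ℝ², ℂ). In particular, for every φ ∈ L²(ℝ², ℂ) and every ε > 0 there exists f ∈ L¹(ℝ⁴, ℂ) with ‖ρ(f)φ − φ‖ < ε. -/

import Mathlib

open MeasureTheory Complex
open scoped ENNReal

noncomputable section

/-- The pointwise action of the projective representation `U^{r,s}(k)` on functions on `ℝ²`. -/
def Ursact (hb th B r s : ℝ) (k : Fin 4 → ℝ) (φ : ℝ × ℝ → ℂ) : ℝ × ℝ → ℂ := fun p =>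
  Complex.exp
      ((Complex.I / hb) * k 2 * p.1 + (Complex.I / hb) * k 3 * p.2
        - (Complex.I * (B * (1 - r) / (r * th * B - hb))) * k 0 * p.2
        - (Complex.I * (r * B / hb)) * k 1 * p.1
        + (Complex.I * (1 / (2 * hb) + s * th * B * (1 - r) / (hb * (r * th * B - hb)))) * k 0 * k 2
        + (Complex.I * (1 / (2 * hb) - r * th * B * (1 - s) / hb ^ 2)) * k 3 * k 1
        - (Complex.I * ((s - 1 / 2) * th / hb ^ 2)) * k 2 * k 3
        + (Complex.I * (-B / (2 * hb)
            + B * (1 - r) * (r * th * B - r * s * th * B - hb) / (hb * (r * th * B - hb)))) * k 0 * k 1) *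
    φ (p.1 + (1 - s) * (th / hb) * k 3 + ((th * B * (r + s - r * s) - hb) / (r * th * B - hb)) * k 0,
       p.2 - s * (th / hb) * k 2 - ((r * th * B * (1 - s) - hb) / hb) * k 1)

/-- The integrated representation `ρ(f)φ = ∫ f(−k) U^{r,s}(k)φ dk` (Bochner integral in `Lp ℂ 2 (volume : Measure (ℝ × ℝ))`),
where the represented unitaries are given by the family `V`. -/
def rho
    (V : (Fin 4 → ℝ) →
      (Lp ℂ 2 (volume : Measure (ℝ × ℝ)) ≃ₗᵢ[ℂ] Lp ℂ 2 (volume : Measure (ℝ × ℝ))))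
    (f : (Fin 4 → ℝ) → ℂ) (φ : Lp ℂ 2 (volume : Measure (ℝ × ℝ))) :
    Lp ℂ 2 (volume : Measure (ℝ × ℝ)) :=
  ∫ k : Fin 4 → ℝ, f (-k) • (V k φ)

/-!
Each `U^{r,s}(k)` multiplies by a phase and translates, so for a continuous compactly supported
`g` the inner product `⟪U(k)g, U(k₀)g⟫` is a parametric integral over one fixed compact set and
depends continuously on `k`. As the `U(k)` are unitary this gives `‖U(k)g - U(k₀)g‖ → 0`, and
the uniform Lipschitz bound extends strong continuity from this dense set to all of `L²`.
Finally `ρ(fₙ)φ`, for normalized bump functions `fₙ` shrinking to `0`, is the mollification of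
`k ↦ U(-k)φ` at `0`, hence tends to `U(0)φ = φ`.
-/

open Filter Topology
open scoped NNReal InnerProductSpace ComplexConjugate

theorem tendsto_of_norm_eq_of_tendsto_inner {𝕜 E X : Type*} [RCLike 𝕜] [NormedAddCommGroup E]
    [InnerProductSpace 𝕜 E] {l : Filter X} {u : X → E} {v : E} (hnorm : ∀ x, ‖u x‖ = ‖v‖)
    (hinner : Tendsto (fun x => ⟪u x, v⟫_𝕜) l (𝓝 ⟪v, v⟫_𝕜)) :
    Tendsto u l (𝓝 v) := by
  have hsq : ∀ x, ‖u x - v‖ = √(2 * (‖v‖ ^ 2 - RCLike.re ⟪u x, v⟫_𝕜)) := by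
    intro x
    rw [← Real.sqrt_sq (norm_nonneg (u x - v)), norm_sub_sq (𝕜 := 𝕜), hnorm]
    ring_nf
  have hre := (RCLike.continuous_re.tendsto _).comp hinner
  rw [Function.comp_def, inner_self_eq_norm_sq] at hre
  rw [tendsto_iff_norm_sub_tendsto_zero]
  simp_rw [hsq]
  convert ((hre.const_sub (‖v‖ ^ 2)).const_mul 2).sqrt
  simp

theorem continuous_apply_of_dense {X E F : Type*} [TopologicalSpace X] [PseudoMetricSpace E]
    [PseudoMetricSpace F] {V : X → E → F} {K : ℝ≥0} (hV : ∀ x, LipschitzWith K (V x))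
    {s : Set E} (hs : Dense s) (h : ∀ φ ∈ s, Continuous fun x => V x φ) (φ : E) :
    Continuous fun x => V x φ := by
  refine continuous_iff_continuousAt.2 fun x₀ => ?_
  have hclosed := (LipschitzWith.uniformEquicontinuous V K hV).equicontinuous
    |>.isClosed_setOfPred_tendsto (l := 𝓝 x₀) (hV x₀).continuous
  exact hclosed.closure_subset_iff.2 (fun ψ hψ => (h ψ hψ).continuousAt) (hs φ)

theorem exists_integrable_norm_integral_smul_sub_lt {G E : Type*} [NormedAddCommGroup G]
    [NormedSpace ℝ G] [FiniteDimensional ℝ G] [MeasurableSpace G] [BorelSpace G]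
    {μ : Measure G} [μ.IsAddHaarMeasure] [NormedAddCommGroup E] [NormedSpace ℝ E]
    [NormedSpace ℂ E] [IsScalarTower ℝ ℂ E] [CompleteSpace E] {u : G → E}
    (hu : Continuous u) {ε : ℝ} (hε : 0 < ε) :
    ∃ f : G → ℂ, Integrable f μ ∧ ‖∫ k, f (-k) • u k ∂μ - u 0‖ < ε := by
  let b : ℕ → ContDiffBump (0 : G) := fun n =>
    ⟨1 / (n + 2), 1 / (n + 1), by positivity, by gcongr; linarith⟩
  have hb : Tendsto (fun n => (b n).rOut) atTop (𝓝 0) := tendsto_one_div_add_atTop_nhds_zero_nat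
  have hconv := ContDiffBump.convolution_tendsto_right_of_continuous (μ := μ) hb
    (hu.comp continuous_neg) 0
  obtain ⟨n, hn⟩ := (hconv.eventually (Metric.ball_mem_nhds _ hε)).exists
  refine ⟨fun k => ((b n).normed μ k : ℂ), (b n).integrable_normed.ofReal, ?_⟩
  rw [← dist_eq_norm]
  convert hn using 2 <;> simp [convolution_lsmul, ContDiffBump.normed_neg,
    RCLike.real_smul_eq_coe_smul (K := ℂ)]

def ursShift (hb th B r s : ℝ) (k : Fin 4 → ℝ) : ℝ × ℝ :=
  ((1 - s) * (th / hb) * k 3 + ((th * B * (r + s - r * s) - hb) / (r * th * B - hb)) * k 0,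
   -(s * (th / hb) * k 2) - ((r * th * B * (1 - s) - hb) / hb) * k 1)

def IsLpRealization (hb th B r s : ℝ)
    (V : (Fin 4 → ℝ) →
      (Lp ℂ 2 (volume : Measure (ℝ × ℝ)) ≃ₗᵢ[ℂ] Lp ℂ 2 (volume : Measure (ℝ × ℝ)))) : Prop :=
  ∀ (k : Fin 4 → ℝ) (φ : Lp ℂ 2 (volume : Measure (ℝ × ℝ))),
    (V k φ : ℝ × ℝ → ℂ) =ᵐ[volume] Ursact hb th B r s k ⇑φ

section Ursact

variable {hb th B r s : ℝ}

theorem Ursact_apply (k : Fin 4 → ℝ) (φ : ℝ × ℝ → ℂ) (p : ℝ × ℝ) :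
    Ursact hb th B r s k φ p = Ursact hb th B r s k 1 p * φ (p + ursShift hb th B r s k) := by
  simp only [Ursact, Pi.one_apply, mul_one, ursShift]
  congr 3 <;> ring

theorem Ursact_zero (φ : ℝ × ℝ → ℂ) : Ursact hb th B r s 0 φ = φ := by
  funext p
  simp [Ursact]

theorem continuous_Ursact_uncurry {φ : ℝ × ℝ → ℂ} (hφ : Continuous φ) :
    Continuous fun q : (Fin 4 → ℝ) × (ℝ × ℝ) => Ursact hb th B r s q.1 φ q.2 := by
  unfold Ursact
  fun_prop

theorem Ursact_congr_ae (k : Fin 4 → ℝ) {φ ψ : ℝ × ℝ → ℂ} (h : φ =ᵐ[volume] ψ) :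
    Ursact hb th B r s k φ =ᵐ[volume] Ursact hb th B r s k ψ := by
  have htransl := (measurePreserving_add_right (volume : Measure (ℝ × ℝ))
    (ursShift hb th B r s k)).quasiMeasurePreserving
  filter_upwards [htransl.ae_eq_comp h] with p hp
  rw [Ursact_apply, Ursact_apply k ψ]
  exact congrArg _ hp

theorem hasCompactSupport_Ursact (k : Fin 4 → ℝ) {φ : ℝ × ℝ → ℂ}
    (hφ : HasCompactSupport φ) :
    HasCompactSupport (Ursact hb th B r s k φ) := by
  have : Ursact hb th B r s k φ =
      Ursact hb th B r s k 1 * (φ ∘ Homeomorph.addRight (ursShift hb th B r s k)) := by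
    funext p
    exact Ursact_apply k φ p
  rw [this]
  exact (hφ.comp_homeomorph _).mul_left

theorem continuous_integral_conj_Ursact_mul {g : ℝ × ℝ → ℂ} (hgc : Continuous g)
    (hgs : HasCompactSupport g) (k₀ : Fin 4 → ℝ) :
    Continuous fun k => ∫ p, conj (Ursact hb th B r s k g p) * Ursact hb th B r s k₀ g p := by
  have hrestrict : ∀ k, ∫ p, conj (Ursact hb th B r s k g p) * Ursact hb th B r s k₀ g p =
      ∫ p in tsupport (Ursact hb th B r s k₀ g),
        conj (Ursact hb th B r s k g p) * Ursact hb th B r s k₀ g p := by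
    intro k
    refine (setIntegral_eq_integral_of_forall_compl_eq_zero fun p hp => ?_).symm
    rw [image_eq_zero_of_notMem_tsupport hp, mul_zero]
  simp_rw [hrestrict]
  have hcont : Continuous fun q : (Fin 4 → ℝ) × (ℝ × ℝ) => Ursact hb th B r s q.1 g q.2 :=
    continuous_Ursact_uncurry hgc
  exact continuous_parametric_integral_of_continuous
    ((continuous_conj.comp hcont).mul (hcont.comp (continuous_const.prodMk continuous_snd)))
    (hasCompactSupport_Ursact k₀ hgs)

variable {V : (Fin 4 → ℝ) →
  (Lp ℂ 2 (volume : Measure (ℝ × ℝ)) ≃ₗᵢ[ℂ] Lp ℂ 2 (volume : Measure (ℝ × ℝ)))}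

theorem IsLpRealization.inner_apply_eq_integral (hV : IsLpRealization hb th B r s V)
    {φ : Lp ℂ 2 (volume : Measure (ℝ × ℝ))} {g : ℝ × ℝ → ℂ} (hφg : φ =ᵐ[volume] g)
    (k k' : Fin 4 → ℝ) :
    ⟪V k φ, V k' φ⟫_ℂ =
      ∫ p, conj (Ursact hb th B r s k g p) * Ursact hb th B r s k' g p := by
  rw [L2.inner_def]
  refine integral_congr_ae ?_
  filter_upwards [(hV k φ).trans (Ursact_congr_ae k hφg),
    (hV k' φ).trans (Ursact_congr_ae k' hφg)] with p hk hk'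
  rw [hk, hk', RCLike.inner_apply, mul_comm]

theorem IsLpRealization.continuous_apply (hV : IsLpRealization hb th B r s V)
    (φ : Lp ℂ 2 (volume : Measure (ℝ × ℝ))) :
    Continuous fun k => V k φ := by
  refine continuous_apply_of_dense (fun k => (V k).lipschitz)
    (Lp.dense_hasCompactSupport_contDiff (by norm_num)) ?_ φ
  rintro ψ ⟨g, hψg, hgs, hgd⟩
  refine continuous_iff_continuousAt.2 fun k₀ => ?_
  refine tendsto_of_norm_eq_of_tendsto_inner (𝕜 := ℂ) (fun k => by simp) ?_
  simp_rw [hV.inner_apply_eq_integral hψg]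
  exact (continuous_integral_conj_Ursact_mul hgd.continuous hgs k₀).tendsto k₀

theorem IsLpRealization.zero_apply (hV : IsLpRealization hb th B r s V)
    (φ : Lp ℂ 2 (volume : Measure (ℝ × ℝ))) :
    V 0 φ = φ :=
  Lp.ext (by simpa only [Ursact_zero] using hV 0 φ)

end Ursact

theorem stmt7_general (hb th B r s : ℝ)
    (V : (Fin 4 → ℝ) →
      (Lp ℂ 2 (volume : Measure (ℝ × ℝ)) ≃ₗᵢ[ℂ] Lp ℂ 2 (volume : Measure (ℝ × ℝ))))
    (hV : ∀ (k : Fin 4 → ℝ) (φ : Lp ℂ 2 (volume : Measure (ℝ × ℝ))),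
      (V k φ : ℝ × ℝ → ℂ) =ᵐ[volume] Ursact hb th B r s k ⇑φ) :
    Dense {ψ : Lp ℂ 2 (volume : Measure (ℝ × ℝ)) |
      ∃ (f : (Fin 4 → ℝ) → ℂ) (φ : Lp ℂ 2 (volume : Measure (ℝ × ℝ))),
        Integrable f ∧ rho V f φ = ψ} ∧
    ∀ φ : Lp ℂ 2 (volume : Measure (ℝ × ℝ)), ∀ ε > (0 : ℝ),
      ∃ f : (Fin 4 → ℝ) → ℂ, Integrable f ∧ ‖rho V f φ - φ‖ < ε := by
  have key : ∀ φ : Lp ℂ 2 (volume : Measure (ℝ × ℝ)), ∀ ε > (0 : ℝ),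
      ∃ f : (Fin 4 → ℝ) → ℂ, Integrable f ∧ ‖rho V f φ - φ‖ < ε := fun φ ε hε => by
    simpa only [rho, IsLpRealization.zero_apply hV] using
      exists_integrable_norm_integral_smul_sub_lt (IsLpRealization.continuous_apply hV φ) hε
  refine ⟨Metric.dense_iff.2 fun φ ε hε => ?_, key⟩
  obtain ⟨f, hf, hlt⟩ := key φ ε hε
  exact ⟨rho V f φ, by rwa [Metric.mem_ball, dist_eq_norm], f, φ, hf, rfl⟩

theorem stmt7 (hb th B r s : ℝ) (hhb : hb ≠ 0) (hth : th ≠ 0) (hB : B ≠ 0)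
    (hnd : hb - th * B ≠ 0) (hrs : r * th * B ≠ hb)
    (V : (Fin 4 → ℝ) →
      (Lp ℂ 2 (volume : Measure (ℝ × ℝ)) ≃ₗᵢ[ℂ] Lp ℂ 2 (volume : Measure (ℝ × ℝ))))
    (hV : ∀ (k : Fin 4 → ℝ) (φ : Lp ℂ 2 (volume : Measure (ℝ × ℝ))),
      (V k φ : ℝ × ℝ → ℂ) =ᵐ[volume] Ursact hb th B r s k ⇑φ) :
    Dense {ψ : Lp ℂ 2 (volume : Measure (ℝ × ℝ)) |
      ∃ (f : (Fin 4 → ℝ) → ℂ) (φ : Lp ℂ 2 (volume : Measure (ℝ × ℝ))),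
        Integrable f ∧ rho V f φ = ψ} ∧
    ∀ φ : Lp ℂ 2 (volume : Measure (ℝ × ℝ)), ∀ ε > (0 : ℝ),
      ∃ f : (Fin 4 → ℝ) → ℂ, Integrable f ∧ ‖rho V f φ - φ‖ < ε :=
  stmt7_general hb th B r s V hV
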